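/- Under the nonlinear fixed-point iteration setup and RRE setup with ε_n ≠ 0, suppose ‖W̃⁺‖·‖ε_n‖ ≤ η and ‖W̃⁺‖·‖W − W̃‖ ≤ Δ₀ < 1. Then the RRE coefficient vector ξ = −W⁺ u_n ∈ ℂᵏ satisfies ‖ξ‖ ≤ (1+L)·η·(1 + √2·Δ₀/(1−Δ₀)), and the scalars defined by γ₀ = 1 − ξ₀, γᵢ = ξ_{i−1} − ξᵢ for 1 ≤ i ≤ k−1, and γ_k = ξ_{k−1} satisfy Σγᵢ = 1 and Σ_{i=0}^{k} |γᵢ| ≤ 1 + 2√k·(1+L)·η·(1 + √2·Δ₀/(1−Δ₀)). -/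

import Mathlib

open scoped Matrix Matrix.Norms.L2Operator

/-- Moore–Penrose inverse of a full-column-rank matrix: `K⁺ = (KᴴK)⁻¹Kᴴ`. -/
noncomputable def pinv {m n : ℕ} (A : Matrix (Fin m) (Fin n) ℂ) : Matrix (Fin n) (Fin m) ℂ :=
  (Aᴴ * A)⁻¹ * Aᴴ

/-- A matrix acting on Euclidean vectors. -/
noncomputable def appE {m n : ℕ} (A : Matrix (Fin m) (Fin n) ℂ)
    (v : EuclideanSpace ℂ (Fin n)) : EuclideanSpace ℂ (Fin m) :=
  Matrix.toEuclideanLin A v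

/-- The `N×k` matrix `U` with columns the first differences `u_{n+j} = x_{n+j+1} − x_{n+j}`,
`j = 0,…,k−1`. -/
noncomputable def Umat (N k n : ℕ) (x : ℕ → EuclideanSpace ℂ (Fin N)) :
    Matrix (Fin N) (Fin k) ℂ :=
  Matrix.of fun p j => (x (n + (j : ℕ) + 1) - x (n + (j : ℕ))) p

/-- The `N×k` matrix `W` with columns the second differences
`w_{n+j} = u_{n+j+1} − u_{n+j}`, `j = 0,…,k−1`. -/
noncomputable def Wmat (N k n : ℕ) (x : ℕ → EuclideanSpace ℂ (Fin N)) :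
    Matrix (Fin N) (Fin k) ℂ :=
  Matrix.of fun p j =>
    ((x (n + (j : ℕ) + 2) - x (n + (j : ℕ) + 1))
      - (x (n + (j : ℕ) + 1) - x (n + (j : ℕ)))) p

/-- The `N×k` matrix `Ũ` with columns `ũ_{n+j} = F̃ʲ(F̃ − I) ε_n` coming from the linear
iteration `x̃_n = x_n`, `x̃_{m+1} = s + F̃(x̃_m − s)`. -/
noncomputable def UmatT (N k : ℕ)
    (F : EuclideanSpace ℂ (Fin N) →L[ℂ] EuclideanSpace ℂ (Fin N))
    (ε : EuclideanSpace ℂ (Fin N)) : Matrix (Fin N) (Fin k) ℂ :=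
  Matrix.of fun p j => ((F ^ (j : ℕ) * (F - 1)) ε) p

/-- The `N×k` matrix `W̃` with columns `w̃_{n+j} = F̃ʲ(F̃ − I)² ε_n` coming from the linear
iteration `x̃_n = x_n`, `x̃_{m+1} = s + F̃(x̃_m − s)`. -/
noncomputable def WmatT (N k : ℕ)
    (F : EuclideanSpace ℂ (Fin N) →L[ℂ] EuclideanSpace ℂ (Fin N))
    (ε : EuclideanSpace ℂ (Fin N)) : Matrix (Fin N) (Fin k) ℂ :=
  Matrix.of fun p j =>
    ((F ^ (j : ℕ) * (F - 1) ^ 2 :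
      EuclideanSpace ℂ (Fin N) →L[ℂ] EuclideanSpace ℂ (Fin N)) ε) p

/-- The RRE approximation `s_{n,k} = x_n − U W⁺ u_n`. -/
noncomputable def sRRE (N k n : ℕ) (x : ℕ → EuclideanSpace ℂ (Fin N)) :
    EuclideanSpace ℂ (Fin N) :=
  x n - appE (Umat N k n x) (appE (pinv (Wmat N k n x)) (x (n + 1) - x n))

/-- The RRE approximation `s̃_{n,k} = x_n − Ũ W̃⁺ ũ_n` for the linear iteration
`x̃_n = x_n`, `x̃_{m+1} = s + F̃(x̃_m − s)`, whose first difference at `n` is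
`ũ_n = (F̃ − I)(x_n − s)`. -/
noncomputable def sRREt (N k n : ℕ)
    (F : EuclideanSpace ℂ (Fin N) →L[ℂ] EuclideanSpace ℂ (Fin N))
    (s : EuclideanSpace ℂ (Fin N)) (x : ℕ → EuclideanSpace ℂ (Fin N)) :
    EuclideanSpace ℂ (Fin N) :=
  x n - appE (UmatT N k F (x n - s))
    (appE (pinv (WmatT N k F (x n - s))) ((F - 1) (x n - s)))

/-!
The coefficients `ξ = -W⁺ u_n` solve a least-squares problem, so `W ξ` is minus the orthogonal
projection of `u_n` onto the range of `W` and `‖W ξ‖ ≤ ‖u_n‖ ≤ (1 + L) ‖ε_n‖`. Viewing `W` as a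
perturbation of `W̃`, `‖c‖ ≤ ‖W̃⁺‖ ‖W̃ c‖ ≤ ‖W̃⁺‖ ‖W c‖ + Δ₀ ‖c‖` for every `c`, which gives
`(1 - Δ₀) ‖ξ‖ ≤ (1 + L) η`; the claimed bound is weaker because `√2 ≥ 1`. The weights `γᵢ` are the
consecutive differences of `1, ξ₀, …, ξ_{k-1}, 0`, so they telescope to `1` and their `ℓ¹` norm is
at most `1 + 2 ‖ξ‖₁ ≤ 1 + 2 √k ‖ξ‖`.
-/

theorem Matrix.isUnit_of_rank_eq_card {n K : Type*} [Fintype n] [DecidableEq n] [Field K]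
    {A : Matrix n n K} (h : A.rank = Fintype.card n) : IsUnit A := by
  rw [← Matrix.mulVec_surjective_iff_isUnit, ← Matrix.coe_mulVecLin, ← LinearMap.range_eq_top]
  exact Submodule.eq_top_of_finrank_eq (by simpa [Matrix.rank] using h)

lemma appE_mul {m n p : ℕ} (A : Matrix (Fin m) (Fin n) ℂ) (B : Matrix (Fin n) (Fin p) ℂ)
    (v : EuclideanSpace ℂ (Fin p)) : appE (A * B) v = appE A (appE B v) := by
  simp [appE, Matrix.toLpLin_apply, Matrix.mulVec_mulVec]

lemma appE_sub {m n : ℕ} (A B : Matrix (Fin m) (Fin n) ℂ) (v : EuclideanSpace ℂ (Fin n)) :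
    appE (A - B) v = appE A v - appE B v := by
  simp [appE, map_sub]

lemma norm_appE_le {m n : ℕ} (A : Matrix (Fin m) (Fin n) ℂ) (v : EuclideanSpace ℂ (Fin n)) :
    ‖appE A v‖ ≤ ‖A‖ * ‖v‖ :=
  A.l2_opNorm_mulVec v

section PseudoInverse

variable {m k : ℕ} {A B : Matrix (Fin m) (Fin k) ℂ}

open ComplexOrder in
lemma isUnit_det_conjTranspose_mul_self (hA : A.rank = k) : IsUnit (Aᴴ * A).det :=
  (Matrix.isUnit_iff_isUnit_det _).mp <|
    Matrix.isUnit_of_rank_eq_card <| by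
      rw [Matrix.rank_conjTranspose_mul_self, hA, Fintype.card_fin]

lemma pinv_mul_self (hA : A.rank = k) : pinv A * A = 1 := by
  rw [pinv, Matrix.mul_assoc, Matrix.nonsing_inv_mul _ (isUnit_det_conjTranspose_mul_self hA)]

lemma isStarProjection_mul_pinv (hA : A.rank = k) : IsStarProjection (A * pinv A) where
  isIdempotentElem := by
    rw [IsIdempotentElem, Matrix.mul_assoc, ← Matrix.mul_assoc (pinv A), pinv_mul_self hA,
      Matrix.one_mul]
  isSelfAdjoint := by
    rw [IsSelfAdjoint, Matrix.star_eq_conjTranspose, pinv, Matrix.conjTranspose_mul,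
      Matrix.conjTranspose_mul, Matrix.conjTranspose_nonsing_inv, Matrix.conjTranspose_mul,
      Matrix.conjTranspose_conjTranspose, Matrix.mul_assoc]

lemma norm_appE_appE_pinv_le (hA : A.rank = k) (u : EuclideanSpace ℂ (Fin m)) :
    ‖appE A (appE (pinv A) u)‖ ≤ ‖u‖ := by
  rw [← appE_mul]
  calc ‖appE (A * pinv A) u‖ ≤ ‖A * pinv A‖ * ‖u‖ := norm_appE_le _ _
    _ ≤ ‖u‖ := mul_le_of_le_one_left (norm_nonneg u) ((isStarProjection_mul_pinv hA).norm_le)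

lemma norm_le_norm_pinv_mul_norm_appE (hA : A.rank = k) (c : EuclideanSpace ℂ (Fin k)) :
    ‖c‖ ≤ ‖pinv A‖ * ‖appE A c‖ := by
  calc ‖c‖ = ‖appE (pinv A * A) c‖ := by simp [pinv_mul_self hA, appE]
    _ = ‖appE (pinv A) (appE A c)‖ := by rw [appE_mul]
    _ ≤ ‖pinv A‖ * ‖appE A c‖ := norm_appE_le _ _

lemma one_sub_mul_norm_le_of_norm_pinv_mul_norm_sub_le (hB : B.rank = k) {Δ : ℝ}
    (hΔ : ‖pinv B‖ * ‖A - B‖ ≤ Δ) (c : EuclideanSpace ℂ (Fin k)) :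
    (1 - Δ) * ‖c‖ ≤ ‖pinv B‖ * ‖appE A c‖ := by
  have hBc : ‖appE B c‖ ≤ ‖appE A c‖ + ‖A - B‖ * ‖c‖ := by
    calc ‖appE B c‖ = ‖appE A c - appE (A - B) c‖ := by rw [appE_sub, sub_sub_cancel]
      _ ≤ ‖appE A c‖ + ‖A - B‖ * ‖c‖ :=
          (norm_sub_le _ _).trans (by gcongr; exact norm_appE_le _ _)
  calc (1 - Δ) * ‖c‖ ≤ ‖pinv B‖ * ‖appE B c‖ - ‖pinv B‖ * ‖A - B‖ * ‖c‖ := by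
        grw [← norm_le_norm_pinv_mul_norm_appE hB c, hΔ]; linarith
    _ ≤ ‖pinv B‖ * ‖appE A c‖ := by grw [hBc]; linarith

lemma one_sub_mul_norm_appE_pinv_le (hA : A.rank = k) (hB : B.rank = k) {Δ : ℝ}
    (hΔ : ‖pinv B‖ * ‖A - B‖ ≤ Δ) (u : EuclideanSpace ℂ (Fin m)) :
    (1 - Δ) * ‖appE (pinv A) u‖ ≤ ‖pinv B‖ * ‖u‖ :=
  (one_sub_mul_norm_le_of_norm_pinv_mul_norm_sub_le hB hΔ _).trans <|
    mul_le_mul_of_nonneg_left (norm_appE_appE_pinv_le hA u) (norm_nonneg _)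

end PseudoInverse

section FixedPointIteration

variable {E : Type*} [SeminormedAddCommGroup E] {f : E → E} {s : E} {δ L : ℝ}

lemma norm_apply_sub_fixedPoint_le (hfs : f s = s)
    (hLip : ∀ x y, ‖x - s‖ ≤ δ → ‖y - s‖ ≤ δ → ‖f x - f y‖ ≤ L * ‖x - y‖)
    {y : E} (hy : ‖y - s‖ ≤ δ) : ‖f y - s‖ ≤ L * ‖y - s‖ := by
  simpa [hfs] using hLip y s hy (by simpa using (norm_nonneg _).trans hy)

lemma norm_apply_sub_self_le (hfs : f s = s)
    (hLip : ∀ x y, ‖x - s‖ ≤ δ → ‖y - s‖ ≤ δ → ‖f x - f y‖ ≤ L * ‖x - y‖)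
    {y : E} (hy : ‖y - s‖ ≤ δ) : ‖f y - y‖ ≤ (1 + L) * ‖y - s‖ :=
  calc ‖f y - y‖ = ‖(f y - s) - (y - s)‖ := by rw [sub_sub_sub_cancel_right]
    _ ≤ L * ‖y - s‖ + ‖y - s‖ :=
        norm_sub_le_of_le (norm_apply_sub_fixedPoint_le hfs hLip hy) le_rfl
    _ = (1 + L) * ‖y - s‖ := by ring

lemma norm_iterate_sub_fixedPoint_le (hL : L ≤ 1) (hfs : f s = s)
    (hLip : ∀ x y, ‖x - s‖ ≤ δ → ‖y - s‖ ≤ δ → ‖f x - f y‖ ≤ L * ‖x - y‖)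
    {x : ℕ → E} (hx0 : ‖x 0 - s‖ ≤ δ) (hxit : ∀ m, x (m + 1) = f (x m)) (m : ℕ) :
    ‖x m - s‖ ≤ δ := by
  induction m with
  | zero => exact hx0
  | succ m ih =>
    rw [hxit m]
    exact (norm_apply_sub_fixedPoint_le hfs hLip ih).trans
      ((mul_le_of_le_one_left (norm_nonneg _) hL).trans ih)

end FixedPointIteration

theorem EuclideanSpace.sum_norm_le_sqrt_card_mul_norm {ι 𝕜 : Type*} [Fintype ι] [RCLike 𝕜]
    (v : EuclideanSpace 𝕜 ι) : ∑ i, ‖v i‖ ≤ √(Fintype.card ι) * ‖v‖ := by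
  rw [EuclideanSpace.norm_eq, ← Real.sqrt_mul (Nat.cast_nonneg _)]
  refine Real.le_sqrt_of_sq_le ?_
  simpa using sq_sum_le_card_mul_sum_sq (s := Finset.univ) (f := fun i => ‖v i‖)

section ExtrapolationWeights

variable {R : Type*} {k : ℕ}

/-- Consecutive differences of this sequence are the RRE weights `γ₀, …, γ_k`, i.e.
`rreTail ξ i = ∑_{j ≥ i} γ_j`. -/
def rreTail [Zero R] [One R] (ξ : Fin k → R) : ℕ → R
  | 0 => 1
  | j + 1 => if h : j < k then ξ ⟨j, h⟩ else 0

lemma sum_range_rreTail_sub [AddCommGroup R] [One R] (ξ : Fin k → R) :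
    ∑ i ∈ Finset.range (k + 1), (rreTail ξ i - rreTail ξ (i + 1)) = 1 := by
  rw [Finset.sum_range_sub']
  simp [rreTail]

lemma sum_range_norm_rreTail_sub_le [SeminormedAddCommGroup R] [One R] [NormOneClass R]
    (ξ : Fin k → R) :
    ∑ i ∈ Finset.range (k + 1), ‖rreTail ξ i - rreTail ξ (i + 1)‖ ≤ 1 + 2 * ∑ j, ‖ξ j‖ := by
  have hξ : ∑ i ∈ Finset.range k, ‖rreTail ξ (i + 1)‖ = ∑ j, ‖ξ j‖ := by
    rw [← Fin.sum_univ_eq_sum_range (fun i => ‖rreTail ξ (i + 1)‖)]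
    simp [rreTail]
  calc ∑ i ∈ Finset.range (k + 1), ‖rreTail ξ i - rreTail ξ (i + 1)‖
      ≤ ∑ i ∈ Finset.range (k + 1), (‖rreTail ξ i‖ + ‖rreTail ξ (i + 1)‖) :=
        Finset.sum_le_sum fun i _ => norm_sub_le _ _
    _ = 1 + 2 * ∑ j, ‖ξ j‖ := by
        rw [Finset.sum_add_distrib, Finset.sum_range_succ', Finset.sum_range_succ, hξ]
        simp only [rreTail, norm_one, lt_self_iff_false, ↓reduceDIte, norm_zero, add_zero]
        ring

lemma eq_rreTail_sub_rreTail [AddGroup R] [One R] {ξ : Fin k → R} {γ : ℕ → R}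
    (hk : 1 ≤ k) (hγ0 : γ 0 = 1 - ξ ⟨0, hk⟩)
    (hγmid : ∀ i : ℕ, 1 ≤ i → i ≤ k - 1 →
      ∀ (h1 : i - 1 < k) (h2 : i < k), γ i = ξ ⟨i - 1, h1⟩ - ξ ⟨i, h2⟩)
    (hγk : γ k = ξ ⟨k - 1, by omega⟩) :
    ∀ i ∈ Finset.range (k + 1), γ i = rreTail ξ i - rreTail ξ (i + 1) := by
  intro i hi
  cases i with
  | zero => simp [hγ0, rreTail, show 0 < k from hk]
  | succ j =>
    have hj : j < k := by simpa using hi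
    obtain rfl | hjk := (Nat.succ_le_of_lt hj).eq_or_lt
    · simp [hγk, rreTail]
    · simp [hγmid (j + 1) (by omega) (by omega) (by omega) hjk, rreTail, hj, hjk]

end ExtrapolationWeights

lemma le_mul_one_add_sqrt_two_mul_div {t B Δ : ℝ} (ht : 0 ≤ t) (hΔ0 : 0 ≤ Δ) (hΔ1 : Δ < 1)
    (h : (1 - Δ) * t ≤ B) : t ≤ B * (1 + √2 * Δ / (1 - Δ)) := by
  have hΔ : 0 < 1 - Δ := by linarith
  have hB : 0 ≤ B := (mul_nonneg hΔ.le ht).trans h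
  calc t ≤ B / (1 - Δ) := by rwa [le_div_iff₀ hΔ, mul_comm]
    _ = B * (1 + 1 * Δ / (1 - Δ)) := by field_simp; ring
    _ ≤ B * (1 + √2 * Δ / (1 - Δ)) := by
        gcongr
        exact Real.one_le_sqrt.mpr one_le_two

/-- Under the nonlinear fixed-point iteration and RRE setup with
`ε_n ≠ 0`, `‖W̃⁺‖·‖ε_n‖ ≤ η`, `‖W̃⁺‖·‖W − W̃‖ ≤ Δ₀ < 1`, the RRE coefficient vector
`ξ = −W⁺ u_n` satisfies `‖ξ‖ ≤ (1+L)·η·(1 + √2·Δ₀/(1−Δ₀))`, and the scalars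
`γ₀ = 1 − ξ₀`, `γᵢ = ξ_{i−1} − ξᵢ` (`1 ≤ i ≤ k−1`), `γ_k = ξ_{k−1}` satisfy
`∑ γᵢ = 1` and `∑ |γᵢ| ≤ 1 + 2√k·(1+L)·η·(1 + √2·Δ₀/(1−Δ₀))`. -/
theorem rre_coefficients_bounded
    (N : ℕ) (s : EuclideanSpace ℂ (Fin N)) (δ : ℝ)
    (L : ℝ) (hL0 : 0 < L) (hL1 : L < 1)
    (f : EuclideanSpace ℂ (Fin N) → EuclideanSpace ℂ (Fin N)) (hfs : f s = s)
    (hLip : ∀ x y : EuclideanSpace ℂ (Fin N),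
      ‖x - s‖ ≤ δ → ‖y - s‖ ≤ δ → ‖f x - f y‖ ≤ L * ‖x - y‖)
    (F : EuclideanSpace ℂ (Fin N) →L[ℂ] EuclideanSpace ℂ (Fin N))
    (x : ℕ → EuclideanSpace ℂ (Fin N)) (hx0 : ‖x 0 - s‖ ≤ δ)
    (hxit : ∀ m, x (m + 1) = f (x m))
    (n k : ℕ) (hk : 1 ≤ k)
    (hWrank : (Wmat N k n x).rank = k) (hWtrank : (WmatT N k F (x n - s)).rank = k)
    (η Δ₀ : ℝ) (hΔ₀0 : 0 ≤ Δ₀) (hΔ₀1 : Δ₀ < 1)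
    (hWtbound : ‖pinv (WmatT N k F (x n - s))‖ * ‖x n - s‖ ≤ η)
    (hΔbound : ‖pinv (WmatT N k F (x n - s))‖
      * ‖Wmat N k n x - WmatT N k F (x n - s)‖ ≤ Δ₀)
    (ξ : EuclideanSpace ℂ (Fin k))
    (hξ : ξ = -(appE (pinv (Wmat N k n x)) (x (n + 1) - x n)))
    (γ : ℕ → ℂ)
    (hγ0 : γ 0 = 1 - ξ ⟨0, hk⟩)
    (hγmid : ∀ i : ℕ, 1 ≤ i → i ≤ k - 1 →
      ∀ (h1 : i - 1 < k) (h2 : i < k), γ i = ξ ⟨i - 1, h1⟩ - ξ ⟨i, h2⟩)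
    (hγk : γ k = ξ ⟨k - 1, by omega⟩) :
    ‖ξ‖ ≤ (1 + L) * η * (1 + Real.sqrt 2 * Δ₀ / (1 - Δ₀)) ∧
    (∑ i ∈ Finset.range (k + 1), γ i) = 1 ∧
    (∑ i ∈ Finset.range (k + 1), ‖γ i‖) ≤
      1 + 2 * Real.sqrt k * (1 + L) * η * (1 + Real.sqrt 2 * Δ₀ / (1 - Δ₀)) := by
  have hu : ‖x (n + 1) - x n‖ ≤ (1 + L) * ‖x n - s‖ := by
    rw [hxit n]
    exact norm_apply_sub_self_le hfs hLip
      (norm_iterate_sub_fixedPoint_le hL1.le hfs hLip hx0 hxit n)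
  have hξη : (1 - Δ₀) * ‖ξ‖ ≤ (1 + L) * η :=
    calc (1 - Δ₀) * ‖ξ‖ ≤ ‖pinv (WmatT N k F (x n - s))‖ * ‖x (n + 1) - x n‖ := by
          rw [hξ, norm_neg]
          exact one_sub_mul_norm_appE_pinv_le hWrank hWtrank hΔbound _
      _ ≤ (1 + L) * (‖pinv (WmatT N k F (x n - s))‖ * ‖x n - s‖) := by
          rw [mul_left_comm]
          gcongr
      _ ≤ (1 + L) * η := by gcongr
  have hξB := le_mul_one_add_sqrt_two_mul_div (norm_nonneg ξ) hΔ₀0 hΔ₀1 hξη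
  have hγ := eq_rreTail_sub_rreTail hk hγ0 hγmid hγk
  refine ⟨hξB, by rw [Finset.sum_congr rfl hγ, sum_range_rreTail_sub], ?_⟩
  calc ∑ i ∈ Finset.range (k + 1), ‖γ i‖
      = ∑ i ∈ Finset.range (k + 1), ‖rreTail ξ i - rreTail ξ (i + 1)‖ :=
        Finset.sum_congr rfl fun i hi => by rw [hγ i hi]
    _ ≤ 1 + 2 * ∑ j, ‖ξ j‖ := sum_range_norm_rreTail_sub_le ξ
    _ ≤ 1 + 2 * (√k * ‖ξ‖) := by
        grw [EuclideanSpace.sum_norm_le_sqrt_card_mul_norm ξ, Fintype.card_fin]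
    _ ≤ 1 + 2 * (√k * ((1 + L) * η * (1 + √2 * Δ₀ / (1 - Δ₀)))) := by grw [hξB]
    _ = 1 + 2 * Real.sqrt k * (1 + L) * η * (1 + Real.sqrt 2 * Δ₀ / (1 - Δ₀)) := by ring
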